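/- For every even integer d ≥ 4 and every ω ∈ ℝ with ω ≠ 0, ∫₀^π (e^{(θ−π)ω} + e^{−(θ−π)ω}) (sin θ)^{d−2} dθ = (d−2)! · (e^{πω} − e^{−πω}) / (ω · ∏_{k=1}^{(d−2)/2} (ω² + (d−2k)²)). -/

import Mathlib

/-!
Since `e^x + e^{-x} = 2 cosh x`, the integrand is `2 f(θ) sin^{d-2} θ` with `f θ = cosh ((θ - π) ω)`,
and `f'' = ω² f`. Integrating the derivative of `f' sin^{n+2} - (n+2) f sin^{n+1} cos` over `[0, π]`,
where it vanishes at both ends, gives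
`(ω² + (n+2)²) ∫₀^π f sin^{n+2} = (n+2)(n+1) ∫₀^π f sin^n`,
and iterating this down to `∫₀^π f = sinh (π ω) / ω` yields the closed form.
-/

open Real intervalIntegral Finset

theorem integral_mul_sin_pow_add_two {f f' : ℝ → ℝ} {c : ℝ}
    (hf : ∀ x, HasDerivAt f (f' x) x) (hf' : ∀ x, HasDerivAt f' (c * f x) x) (n : ℕ) :
    (c + ((n : ℝ) + 2) ^ 2) * ∫ x in (0)..π, f x * sin x ^ (n + 2)
      = ((n : ℝ) + 2) * ((n : ℝ) + 1) * ∫ x in (0)..π, f x * sin x ^ n := by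
  have hfc : Continuous f := continuous_iff_continuousAt.2 fun x => (hf x).continuousAt
  have hderiv : ∀ x ∈ Set.uIcc 0 π, HasDerivAt
      (fun x => f' x * sin x ^ (n + 2) - (n + 2) * f x * sin x ^ (n + 1) * cos x)
      ((c + ((n : ℝ) + 2) ^ 2) * (f x * sin x ^ (n + 2))
        - ((n : ℝ) + 2) * ((n : ℝ) + 1) * (f x * sin x ^ n)) x := by
    intro x _
    refine (((hf' x).mul ((hasDerivAt_sin x).pow (n + 2))).sub
      ((((hf x).const_mul ((n : ℝ) + 2)).mul ((hasDerivAt_sin x).pow (n + 1))).mul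
        (hasDerivAt_cos x))).congr_deriv ?_
    simp only [Pi.mul_apply, Pi.pow_apply]
    push_cast
    linear_combination -(Real.cos_sq' x) * (((n : ℝ) + 2) * ((n : ℝ) + 1) * f x * sin x ^ n)
  have hint := integral_eq_sub_of_hasDerivAt hderiv ((by fun_prop : Continuous _).intervalIntegrable _ _)
  have hi (k : ℕ) : IntervalIntegrable (fun x => f x * sin x ^ k) MeasureTheory.volume 0 π :=
    (hfc.mul (by fun_prop)).intervalIntegrable _ _
  rw [integral_sub ((hi _).const_mul _) ((hi _).const_mul _),
    integral_const_mul, integral_const_mul] at hint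
  simp only [sin_zero, sin_pi, zero_pow (Nat.succ_ne_zero _), mul_zero, zero_mul,
    sub_self] at hint
  linarith

theorem integral_cosh_sub_pi_mul {ω : ℝ} (hω : ω ≠ 0) :
    ∫ θ in (0)..π, cosh ((θ - π) * ω) = sinh (π * ω) / ω := by
  have hderiv : ∀ θ ∈ Set.uIcc 0 π,
      HasDerivAt (fun θ => sinh ((θ - π) * ω) / ω) (cosh ((θ - π) * ω)) θ := by
    intro θ _
    refine ((((hasDerivAt_id' θ).sub_const π).mul_const ω).sinh.div_const ω).congr_deriv ?_
    field_simp
  rw [integral_eq_sub_of_hasDerivAt hderiv ((by fun_prop : Continuous _).intervalIntegrable _ _)]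
  simp [sinh_neg, neg_div]

theorem integral_cosh_sub_pi_mul_mul_sin_pow_two_mul {ω : ℝ} (hω : ω ≠ 0) (m : ℕ) :
    ∫ θ in (0)..π, cosh ((θ - π) * ω) * sin θ ^ (2 * m)
      = (2 * m).factorial * sinh (π * ω) / (ω * ∏ k ∈ Icc 1 m, (ω ^ 2 + (2 * k : ℝ) ^ 2)) := by
  have hcosh (θ : ℝ) : HasDerivAt (fun θ => cosh ((θ - π) * ω)) (ω * sinh ((θ - π) * ω)) θ :=
    (((hasDerivAt_id' θ).sub_const π).mul_const ω).cosh.congr_deriv (by ring)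
  have hsinh (θ : ℝ) :
      HasDerivAt (fun θ => ω * sinh ((θ - π) * ω)) (ω ^ 2 * cosh ((θ - π) * ω)) θ :=
    ((((hasDerivAt_id' θ).sub_const π).mul_const ω).sinh.const_mul ω).congr_deriv (by ring)
  induction m with
  | zero => simpa using integral_cosh_sub_pi_mul hω
  | succ m ih =>
    have hrec := integral_mul_sin_pow_add_two hcosh hsinh (2 * m)
    have hprod : 0 < ∏ k ∈ Icc 1 m, (ω ^ 2 + (2 * k : ℝ) ^ 2) := prod_pos fun k _ => by positivity
    rw [ih, mul_div_assoc', eq_div_iff (by positivity)] at hrec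
    rw [prod_Icc_succ_top (by omega), mul_add_one, Nat.factorial_succ, Nat.factorial_succ,
      eq_div_iff (by positivity)]
    push_cast at hrec ⊢
    linear_combination hrec

theorem prod_Icc_one_reflect {M : Type*} [CommMonoid M] (g : ℕ → M) (m : ℕ) :
    ∏ k ∈ Icc 1 m, g (m + 1 - k) = ∏ k ∈ Icc 1 m, g k := by
  simpa [Ico_add_one_right_eq_Icc] using prod_Ico_reflect g 1 (m := m + 1) (n := m + 1) (by omega)

theorem sin_pow_exp_integral_closed_form_general (d : ℕ) (hde : Even d)
    (ω : ℝ) (hω : ω ≠ 0) :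
    (∫ θ in (0:ℝ)..Real.pi,
        (Real.exp ((θ - Real.pi) * ω) + Real.exp (-((θ - Real.pi) * ω))) *
          (Real.sin θ) ^ (d - 2))
      = (Nat.factorial (d - 2) : ℝ) *
          (Real.exp (Real.pi * ω) - Real.exp (-(Real.pi * ω))) /
          (ω * ∏ k ∈ Finset.Icc 1 ((d - 2) / 2), (ω ^ 2 + ((d : ℝ) - 2 * k) ^ 2)) := by
  obtain ⟨r, rfl⟩ := hde
  obtain ⟨m, hm⟩ : ∃ m, r + r - 2 = 2 * m := ⟨r - 1, by omega⟩
  have hhalf : 2 * m / 2 = m := by omega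
  have hreflect : ∏ k ∈ Icc 1 m, (ω ^ 2 + (((r + r : ℕ) : ℝ) - 2 * k) ^ 2)
      = ∏ k ∈ Icc 1 m, (ω ^ 2 + (2 * k : ℝ) ^ 2) := by
    rw [← prod_Icc_one_reflect]
    refine prod_congr rfl fun k hk => ?_
    rw [mem_Icc] at hk
    -- `k ≥ 1` excludes `d = 0`, where `d - 2` truncates to `0`
    obtain rfl : r = m + 1 := by omega
    rw [Nat.cast_sub (by omega)]
    push_cast
    ring
  have hcosh (x : ℝ) : exp x + exp (-x) = 2 * cosh x := by rw [cosh_eq]; ring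
  have hsinh (x : ℝ) : exp x - exp (-x) = 2 * sinh x := by rw [sinh_eq]; ring
  simp_rw [hcosh, hsinh, mul_assoc]
  rw [integral_const_mul, hm, hhalf, hreflect,
    integral_cosh_sub_pi_mul_mul_sin_pow_two_mul hω]
  ring

/-- Closed form of `∫₀^π (e^{(θ−π)ω} + e^{−(θ−π)ω}) (sin θ)^{d−2} dθ` for even `d ≥ 4`
and `ω ≠ 0`. -/
theorem sin_pow_exp_integral_closed_form (d : ℕ) (hd : 4 ≤ d) (hde : Even d)
    (ω : ℝ) (hω : ω ≠ 0) :
    (∫ θ in (0:ℝ)..Real.pi,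
        (Real.exp ((θ - Real.pi) * ω) + Real.exp (-((θ - Real.pi) * ω))) *
          (Real.sin θ) ^ (d - 2))
      = (Nat.factorial (d - 2) : ℝ) *
          (Real.exp (Real.pi * ω) - Real.exp (-(Real.pi * ω))) /
          (ω * ∏ k ∈ Finset.Icc 1 ((d - 2) / 2), (ω ^ 2 + ((d : ℝ) - 2 * k) ^ 2)) :=
  sin_pow_exp_integral_closed_form_general d hde ω hω
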